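/- arXiv:1112.1859 — 4 statements merged into one kernel-verified Lean document; each statement's English description precedes it below -/
import Mathlib

section
/- Assume the exactly transported particles stay inside the prescribed supports, i.e. F̄(Σ⁰_{h,k}) ⊆ Σ_{h,k} for every k ∈ ℤ^d. Then the approximate transport operator satisfies the uniform error bound ‖(T̄_h − T̄_ex) f⁰_h‖_{L^∞(ℝ^d)} ≤ c_w · L_φ · e_B(h) · Θ(h) · h^{−1} · ‖f⁰‖_{L^∞}. -/
open scoped NNReal
open Set

/-- Grid node `x⁰_k := h k`. -/
noncomputable def node (d : ℕ) (h : ℝ) (k : Fin d → ℤ) : Fin d → ℝ :=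
  fun i => h * (k i : ℝ)

/-- Particle shape function `φ⁰_{h,k}(x) := h^{-d} φ(h⁻¹ x - k)`. -/
noncomputable def part (d : ℕ) (h : ℝ) (φ : (Fin d → ℝ) → ℝ)
    (k : Fin d → ℤ) (x : Fin d → ℝ) : ℝ :=
  (h ^ d)⁻¹ * φ (fun i => x i / h - (k i : ℝ))

/-! The pointwise error is a sum over the at most `Θ` particles whose a priori support contains
the point. Each term is bounded by the weight bound `c_w h^d ‖f⁰‖_∞` times the variation of
`φ⁰_{h,k}` between the approximate and the exact foot of the characteristic; the rescaled shape
function is Lipschitz with constant `L_φ h^{-(d+1)}` and the two feet are `e_B` apart. The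
assumption `F̄(Σ⁰_{h,k}) ⊆ Σ_{h,k}` makes the exact sum vanish termwise outside the same set of
particles. -/

open Finset in
theorem abs_tsum_sub_tsum_le_card_mul {ι : Type*} {a b : ι → ℝ} {s : Finset ι} {c : ℝ}
    (ha : ∀ k ∉ s, a k = 0) (hb : ∀ k ∉ s, b k = 0) (hab : ∀ k ∈ s, |a k - b k| ≤ c) :
    |∑' k, a k - ∑' k, b k| ≤ #s * c := by
  rw [tsum_eq_sum ha, tsum_eq_sum hb, ← sum_sub_distrib]
  calc |∑ k ∈ s, (a k - b k)| ≤ ∑ k ∈ s, |a k - b k| := abs_sum_le_sum_abs _ _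
    _ ≤ ∑ _k ∈ s, c := sum_le_sum hab
    _ = #s * c := by rw [sum_const, nsmul_eq_mul]

theorem dist_part_le {d : ℕ} {h : ℝ} (hh : 0 < h) {φ : (Fin d → ℝ) → ℝ} {Lφ : ℝ≥0}
    (hφ : LipschitzWith Lφ φ) (k : Fin d → ℤ) (y z : Fin d → ℝ) :
    dist (part d h φ k y) (part d h φ k z) ≤ Lφ / h ^ (d + 1) * dist y z := by
  have hrescale (y : Fin d → ℝ) :
      (fun i => y i / h - (k i : ℝ)) = h⁻¹ • y - fun i => (k i : ℝ) := by
    funext i; simp [div_eq_inv_mul]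
  calc dist (part d h φ k y) (part d h φ k z)
      = (h ^ d)⁻¹ * dist (φ (h⁻¹ • y - fun i => (k i : ℝ))) (φ (h⁻¹ • z - fun i => (k i : ℝ))) := by
        rw [part, part, hrescale, hrescale, Real.dist_eq, Real.dist_eq, ← mul_sub, abs_mul,
          abs_of_pos (inv_pos.2 (pow_pos hh d))]
    _ ≤ (h ^ d)⁻¹ * (Lφ * (h⁻¹ * dist y z)) := by
        gcongr
        refine (hφ.dist_le_mul _ _).trans_eq ?_
        rw [dist_sub_right, dist_smul₀, Real.norm_of_nonneg (by positivity)]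
    _ = Lφ / h ^ (d + 1) * dist y z := by
        field_simp
        ring

theorem approx_transport_uniform_error_general
    (d : ℕ) (h : ℝ) (hh : 0 < h)
    (φ : (Fin d → ℝ) → ℝ) (Lφ : ℝ≥0) (hφLip : LipschitzWith Lφ φ)
    (f0 : (Fin d → ℝ) → ℝ)
    (cw : ℝ)
    (w : (Fin d → ℤ) → ℝ) (hw : ∀ k, |w k| ≤ cw * h ^ d * ⨆ y, |f0 y|)
    (F : (Fin d → ℝ) ≃ (Fin d → ℝ))
    (Bh : (Fin d → ℤ) → (Fin d → ℝ) → (Fin d → ℝ))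
    (Sh : (Fin d → ℤ) → Set (Fin d → ℝ))
    (Θ : ℕ)
    (hfin : ∀ x : Fin d → ℝ, {k : Fin d → ℤ | x ∈ Sh k}.Finite)
    (hΘ : ∀ x : Fin d → ℝ, ({k : Fin d → ℤ | x ∈ Sh k}).ncard ≤ Θ)
    (eB : ℝ) (heB0 : 0 ≤ eB)
    (heB : ∀ k, ∀ x ∈ Sh k, ‖Bh k x - F.symm x‖ ≤ eB)
    (hdom : ∀ k, F '' Function.support (part d h φ k) ⊆ Sh k) :
    ∀ x : Fin d → ℝ,
      |(∑' k : Fin d → ℤ, w k * (Sh k).indicator (fun y => part d h φ k (Bh k y)) x)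
          - ∑' k : Fin d → ℤ, w k * part d h φ k (F.symm x)|
        ≤ cw * (Lφ : ℝ) * eB * (Θ : ℝ) / h * ⨆ y, |f0 y| := by
  intro x
  set M := ⨆ y, |f0 y|
  set S := (hfin x).toFinset
  have hmem {k} : k ∈ S ↔ x ∈ Sh k := (hfin x).mem_toFinset
  have hwM : 0 ≤ cw * h ^ d * M := (abs_nonneg _).trans (hw 0)
  have hterm : ∀ k ∈ S, |w k * (Sh k).indicator (fun y => part d h φ k (Bh k y)) x
      - w k * part d h φ k (F.symm x)| ≤ cw * h ^ d * M * (Lφ / h ^ (d + 1) * eB) := by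
    intro k hk
    rw [indicator_of_mem (hmem.1 hk), ← mul_sub, abs_mul, ← Real.dist_eq]
    refine mul_le_mul (hw k) ((dist_part_le hh hφLip k _ _).trans ?_) dist_nonneg hwM
    exact mul_le_mul_of_nonneg_left ((dist_eq_norm _ _).trans_le (heB k x (hmem.1 hk)))
      (by positivity)
  have hexact : ∀ k ∉ S, w k * part d h φ k (F.symm x) = 0 := fun k hk =>
    mul_eq_zero_of_right _ <| by_contra fun hne =>
      hk (hmem.2 (hdom k ⟨F.symm x, hne, F.apply_symm_apply x⟩))
  have hcard : (S.card : ℝ) ≤ Θ := by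
    exact_mod_cast (ncard_eq_toFinset_card _ (hfin x)).symm.trans_le (hΘ x)
  calc _ ≤ S.card * (cw * h ^ d * M * (Lφ / h ^ (d + 1) * eB)) :=
        abs_tsum_sub_tsum_le_card_mul
          (fun k hk => by rw [indicator_of_notMem (mt hmem.2 hk), mul_zero]) hexact hterm
    _ ≤ Θ * (cw * h ^ d * M * (Lφ / h ^ (d + 1) * eB)) :=
        mul_le_mul_of_nonneg_right hcard (mul_nonneg hwM (by positivity))
    _ = cw * (Lφ : ℝ) * eB * (Θ : ℝ) / h * M := by
        field_simp
        ring

/-- if the exactly transported particles stay inside the prescribed supports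
`Σ_{h,k}`, then the approximate transport operator satisfies the uniform error bound
`‖(T̄_h − T̄_ex) f⁰_h‖_∞ ≤ c_w L_φ e_B(h) Θ(h) h⁻¹ ‖f⁰‖_∞`. -/
theorem approx_transport_uniform_error
    (d : ℕ) (hd : 1 ≤ d) (h : ℝ) (hh : 0 < h)
    (φ : (Fin d → ℝ) → ℝ) (Lφ : ℝ≥0) (hφLip : LipschitzWith Lφ φ)
    (ρ0 : ℝ) (hρ0 : 0 < ρ0) (hφsupp : ∀ x, φ x ≠ 0 → ‖x‖ ≤ ρ0)
    (f0 : (Fin d → ℝ) → ℝ) (hf0 : BddAbove (Set.range fun x => |f0 x|))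
    (cw : ℝ) (hcw : 0 < cw)
    (w : (Fin d → ℤ) → ℝ) (hw : ∀ k, |w k| ≤ cw * h ^ d * ⨆ y, |f0 y|)
    (F : (Fin d → ℝ) ≃ (Fin d → ℝ))
    (Bh : (Fin d → ℤ) → (Fin d → ℝ) → (Fin d → ℝ))
    (Sh : (Fin d → ℤ) → Set (Fin d → ℝ))
    (Θ : ℕ)
    (hfin : ∀ x : Fin d → ℝ, {k : Fin d → ℤ | x ∈ Sh k}.Finite)
    (hΘ : ∀ x : Fin d → ℝ, ({k : Fin d → ℤ | x ∈ Sh k}).ncard ≤ Θ)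
    (eB : ℝ) (heB0 : 0 ≤ eB)
    (heB : ∀ k, ∀ x ∈ Sh k, ‖Bh k x - F.symm x‖ ≤ eB)
    (hdom : ∀ k, F '' Function.support (part d h φ k) ⊆ Sh k) :
    ∀ x : Fin d → ℝ,
      |(∑' k : Fin d → ℤ, w k * (Sh k).indicator (fun y => part d h φ k (Bh k y)) x)
          - ∑' k : Fin d → ℤ, w k * part d h φ k (F.symm x)|
        ≤ cw * (Lφ : ℝ) * eB * (Θ : ℝ) / h * ⨆ y, |f0 y| :=
  approx_transport_uniform_error_general d h hh φ Lφ hφLip f0 cw w hw F Bh Sh Θ hfin hΘ eB heB0 heB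
    hdom
end

section
/- Suppose each approximate backward flow B̄_{h,k} is a bijection of ℝ^d with inverse F̄_{h,k}, define T̄_h φ⁰_{h,k}(x) := φ⁰_{h,k}(B̄_{h,k}(x)) and Σ_{h,k} := F̄(Σ⁰_{h,k}) ∪ F̄_{h,k}(Σ⁰_{h,k}), and assume there is Λ > 0 such that B̄ is Λ-Lipschitz on ℝ^d and each B̄_{h,k} is Λ-Lipschitz on Σ_{h,k} (with respect to ‖·‖_∞). Then, with e_F(h) := sup_{k∈ℤ^d} sup_{x̂∈Σ⁰_{h,k}} ‖F̄_{h,k}(x̂) − F̄(x̂)‖_∞, there exists a constant C depending only on c_w, L_φ, ρ⁰ and d such that ‖(T̄_h − T̄_ex) f⁰_h‖_{L^∞(ℝ^d)} ≤ C (1 + Λ e_F(h)/h)^d · (Λ e_F(h)/h) · ‖f⁰‖_{L^∞}. -/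
open scoped NNReal
open Set

/-!
Both backward flows send `x` to within `Λ e_F` of each other whenever one of them lands in the
support of `φ⁰_{h,k}`, so by the Lipschitz bound on `φ` each term of the difference is at most
`c_w L_φ (Λ e_F / h) ‖f⁰‖_∞`. Only the particles whose node lies within `h ρ⁰ + Λ e_F` of
`B̄ x` contribute, and there are at most `(2ρ⁰ + 2Λ e_F / h + 1)^d` of them.
-/

theorem abs_tsum_sub_tsum_le_card_mul_s3 {ι : Type*} {f g : ι → ℝ} (s : Finset ι)
    (hf : ∀ i ∉ s, f i = 0) (hg : ∀ i ∉ s, g i = 0) {c : ℝ} (hc : ∀ i, |f i - g i| ≤ c) :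
    |∑' i, f i - ∑' i, g i| ≤ s.card * c := by
  rw [tsum_eq_sum hf, tsum_eq_sum hg, ← Finset.sum_sub_distrib]
  calc |∑ i ∈ s, (f i - g i)| ≤ ∑ i ∈ s, |f i - g i| := Finset.abs_sum_le_sum_abs _ _
    _ ≤ s.card * c := by simpa using Finset.sum_le_card_nsmul s _ c fun i _ => hc i

theorem dist_apply_symm_le_of_mem {α : Type*} [PseudoMetricSpace α] {F B : α ≃ α} {s : Set α}
    {Λ : ℝ≥0} {e : ℝ} (hF : LipschitzWith Λ F.symm)
    (hB : LipschitzOnWith Λ B (F '' s ∪ B.symm '' s)) (he : ∀ y ∈ s, dist (B.symm y) (F y) ≤ e)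
    {x : α} (hx : B x ∈ s ∨ F.symm x ∈ s) : dist (B x) (F.symm x) ≤ Λ * e := by
  rcases hx with hx | hx
  · calc dist (B x) (F.symm x) = dist (F.symm (F (B x))) (F.symm (B.symm (B x))) := by simp
      _ ≤ Λ * dist (F (B x)) (B.symm (B x)) := hF.dist_le_mul _ _
      _ ≤ Λ * e := by gcongr; rw [dist_comm]; exact he _ hx
  · calc dist (B x) (F.symm x) = dist (B (F (F.symm x))) (B (B.symm (F.symm x))) := by simp
      _ ≤ Λ * dist (F (F.symm x)) (B.symm (F.symm x)) :=
          hB.dist_le_mul _ (.inl ⟨_, hx, rfl⟩) _ (.inr ⟨_, hx, rfl⟩)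
      _ ≤ Λ * e := by gcongr; rw [dist_comm]; exact he _ hx

section Particles

variable {d : ℕ} {h : ℝ} {φ : (Fin d → ℝ) → ℝ} {k : Fin d → ℤ}

theorem part_eq_smul (hh : h ≠ 0) (x : Fin d → ℝ) :
    part d h φ k x = (h ^ d)⁻¹ * φ (h⁻¹ • (x - node d h k)) := by
  unfold part
  congr 2
  funext i
  simp only [node, Pi.smul_apply, Pi.sub_apply, smul_eq_mul]
  field_simp

theorem dist_node_le_of_part_ne_zero (hh : 0 < h) {ρ : ℝ} (hφ : ∀ x, φ x ≠ 0 → ‖x‖ ≤ ρ)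
    {x : Fin d → ℝ} (hx : part d h φ k x ≠ 0) : dist x (node d h k) ≤ h * ρ := by
  rw [part_eq_smul hh.ne'] at hx
  have := hφ _ (right_ne_zero_of_mul hx)
  rw [norm_smul, norm_inv, Real.norm_of_nonneg hh.le, ← dist_eq_norm, inv_mul_le_iff₀ hh] at this
  exact this

theorem abs_part_sub_part_le (hh : 0 < h) {L : ℝ≥0} (hφ : LipschitzWith L φ) (y z : Fin d → ℝ) :
    |part d h φ k y - part d h φ k z| ≤ L * dist y z / h ^ (d + 1) := by
  rw [part_eq_smul hh.ne', part_eq_smul hh.ne', ← mul_sub, abs_mul,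
    abs_of_pos (by positivity : 0 < (h ^ d)⁻¹), ← Real.dist_eq]
  calc (h ^ d)⁻¹ * dist (φ (h⁻¹ • (y - node d h k))) (φ (h⁻¹ • (z - node d h k)))
      ≤ (h ^ d)⁻¹ * (L * dist (h⁻¹ • (y - node d h k)) (h⁻¹ • (z - node d h k))) := by
        gcongr; exact hφ.dist_le_mul _ _
    _ = L * dist y z / h ^ (d + 1) := by
        rw [dist_smul₀, dist_sub_right, norm_inv, Real.norm_of_nonneg hh.le]
        field_simp
        ring

end Particles

noncomputable def nodesNear (d : ℕ) (h : ℝ) (z : Fin d → ℝ) (r : ℝ) : Finset (Fin d → ℤ) :=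
  Fintype.piFinset fun i => Finset.Icc ⌈(z i - r) / h⌉ ⌊(z i + r) / h⌋

section NodesNear

variable {d : ℕ} {h : ℝ}

theorem mem_nodesNear (hh : 0 < h) {z : Fin d → ℝ} {r : ℝ} {k : Fin d → ℤ}
    (hk : dist z (node d h k) ≤ r) : k ∈ nodesNear d h z r := by
  simp only [nodesNear, Fintype.mem_piFinset, Finset.mem_Icc, Int.ceil_le, Int.le_floor,
    div_le_iff₀ hh, le_div_iff₀ hh]
  intro i
  have := (dist_le_pi_dist z (node d h k) i).trans hk
  rw [Real.dist_eq, abs_le] at this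
  simp only [node] at this
  constructor <;> linarith

theorem card_nodesNear_le (hh : 0 < h) (z : Fin d → ℝ) {r : ℝ} (hr : 0 ≤ r) :
    ((nodesNear d h z r).card : ℝ) ≤ (2 * r / h + 1) ^ d := by
  rw [nodesNear, Fintype.card_piFinset, Nat.cast_prod]
  calc ∏ i, ((Finset.Icc ⌈(z i - r) / h⌉ ⌊(z i + r) / h⌋).card : ℝ)
      ≤ ∏ _i : Fin d, (2 * r / h + 1) := by
        gcongr with i
        rw [Int.card_Icc]
        have hfloor := Int.floor_le ((z i + r) / h)
        have hceil := Int.le_ceil ((z i - r) / h)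
        have hwidth : (z i + r) / h - (z i - r) / h = 2 * r / h := by ring
        rcases le_total (⌊(z i + r) / h⌋ + 1 - ⌈(z i - r) / h⌉) 0 with hle | hle
        · rw [Int.toNat_of_nonpos hle, Nat.cast_zero]; positivity
        · rw [← Int.cast_natCast, Int.toNat_of_nonneg hle]
          push_cast
          linarith
    _ = (2 * r / h + 1) ^ d := by simp

end NodesNear

theorem transport_error_forward_flow_general
    (d : ℕ) (cw : ℝ) (hcw : 0 < cw) (Lφ : ℝ≥0)
    (ρ0 : ℝ) (hρ0 : 0 < ρ0) :
    ∃ C : ℝ, 0 < C ∧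
      ∀ (h : ℝ), 0 < h →
      ∀ (φ : (Fin d → ℝ) → ℝ), LipschitzWith Lφ φ → (∀ x, φ x ≠ 0 → ‖x‖ ≤ ρ0) →
      ∀ (f0 : (Fin d → ℝ) → ℝ), BddAbove (Set.range fun x => |f0 x|) →
      ∀ (w : (Fin d → ℤ) → ℝ), (∀ k, |w k| ≤ cw * h ^ d * ⨆ y, |f0 y|) →
      ∀ (F : (Fin d → ℝ) ≃ (Fin d → ℝ))
        (Bh : (Fin d → ℤ) → (Fin d → ℝ) ≃ (Fin d → ℝ))
        (Λ : ℝ≥0), 0 < Λ →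
        LipschitzWith Λ (F.symm : (Fin d → ℝ) → (Fin d → ℝ)) →
        (∀ k : Fin d → ℤ,
          LipschitzOnWith Λ (Bh k)
            (F '' Function.support (part d h φ k)
              ∪ (Bh k).symm '' Function.support (part d h φ k))) →
      ∀ (eF : ℝ), 0 ≤ eF →
        (∀ k : Fin d → ℤ, ∀ y ∈ Function.support (part d h φ k),
          ‖(Bh k).symm y - F y‖ ≤ eF) →
      ∀ x : Fin d → ℝ,
        |(∑' k : Fin d → ℤ, w k * part d h φ k (Bh k x))
            - ∑' k : Fin d → ℤ, w k * part d h φ k (F.symm x)|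
          ≤ C * (1 + (Λ : ℝ) * eF / h) ^ d * ((Λ : ℝ) * eF / h) * ⨆ y, |f0 y| := by
  refine ⟨cw * (Lφ + 1) * (2 * ρ0 + 2) ^ d, by positivity, ?_⟩
  intro h hh φ hφ hsupp f0 hf0 w hw F Bh Λ _ hF hBh eF heF heFk x
  set M := ⨆ y, |f0 y|
  set t := (Λ : ℝ) * eF / h
  have hM : 0 ≤ M := (abs_nonneg _).trans (le_ciSup hf0 x)
  have ht : 0 ≤ t := by positivity
  have hflows (k : Fin d → ℤ) (hk : part d h φ k (Bh k x) ≠ 0 ∨ part d h φ k (F.symm x) ≠ 0) :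
      dist (Bh k x) (F.symm x) ≤ Λ * eF :=
    dist_apply_symm_le_of_mem hF (hBh k) (fun y hy => (dist_eq_norm _ _).trans_le (heFk k y hy)) hk
  have hnear (k : Fin d → ℤ) (hk : part d h φ k (Bh k x) ≠ 0 ∨ part d h φ k (F.symm x) ≠ 0) :
      k ∈ nodesNear d h (F.symm x) (h * ρ0 + Λ * eF) := by
    refine mem_nodesNear hh ?_
    rcases hk with hk | hk
    · calc dist (F.symm x) (node d h k) ≤ dist (Bh k x) (F.symm x) + dist (Bh k x) (node d h k) :=
            dist_triangle_left _ _ _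
        _ ≤ Λ * eF + h * ρ0 :=
            add_le_add (hflows k (.inl hk)) (dist_node_le_of_part_ne_zero hh hsupp hk)
        _ = h * ρ0 + Λ * eF := add_comm _ _
    · exact (dist_node_le_of_part_ne_zero hh hsupp hk).trans
        (le_add_of_nonneg_right (by positivity))
  have hterm (k : Fin d → ℤ) :
      |w k * part d h φ k (Bh k x) - w k * part d h φ k (F.symm x)| ≤ cw * Lφ * M * t := by
    by_cases hk : part d h φ k (Bh k x) ≠ 0 ∨ part d h φ k (F.symm x) ≠ 0
    · calc |w k * part d h φ k (Bh k x) - w k * part d h φ k (F.symm x)|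
          = |w k| * |part d h φ k (Bh k x) - part d h φ k (F.symm x)| := by rw [← mul_sub, abs_mul]
        _ ≤ (cw * h ^ d * M) * (Lφ * (Λ * eF) / h ^ (d + 1)) := by
            gcongr
            · exact hw k
            · exact (abs_part_sub_part_le hh hφ _ _).trans (by gcongr; exact hflows k hk)
        _ = cw * Lφ * M * t := by simp only [t]; field_simp; ring
    · rw [not_or, not_not, not_not] at hk
      rw [hk.1, hk.2, sub_self, abs_zero]
      positivity
  calc _ ≤ (nodesNear d h (F.symm x) (h * ρ0 + Λ * eF)).card * (cw * Lφ * M * t) :=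
        abs_tsum_sub_tsum_le_card_mul_s3 _
          (fun k hk => by_contra fun hne => hk (hnear k (.inl (right_ne_zero_of_mul hne))))
          (fun k hk => by_contra fun hne => hk (hnear k (.inr (right_ne_zero_of_mul hne)))) hterm
    _ ≤ (2 * (h * ρ0 + Λ * eF) / h + 1) ^ d * (cw * Lφ * M * t) := by
        gcongr; exact card_nodesNear_le hh _ (by positivity)
    _ = (2 * ρ0 + 2 * t + 1) ^ d * (cw * Lφ * M * t) := by
        congr 2; simp only [t]; field_simp
    _ ≤ ((2 * ρ0 + 2) * (1 + t)) ^ d * (cw * (Lφ + 1) * M * t) := by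
        gcongr ?_ ^ _ * (_ * ?_ * _ * _)
        · nlinarith
        · linarith
    _ = cw * (Lφ + 1) * (2 * ρ0 + 2) ^ d * (1 + t) ^ d * t * M := by rw [mul_pow]; ring

/-- under the uniform `Λ`-Lipschitz assumptions on the exact and approximate
backward flows, the transport error is controlled by the forward flow error `e_F(h)`:
`‖(T̄_h − T̄_ex) f⁰_h‖_∞ ≤ C (1 + Λ e_F/h)^d (Λ e_F/h) ‖f⁰‖_∞`, `C = C(c_w, L_φ, ρ⁰, d)`. -/
theorem transport_error_forward_flow
    (d : ℕ) (hd : 1 ≤ d) (cw : ℝ) (hcw : 0 < cw) (Lφ : ℝ≥0)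
    (ρ0 : ℝ) (hρ0 : 0 < ρ0) :
    ∃ C : ℝ, 0 < C ∧
      ∀ (h : ℝ), 0 < h →
      ∀ (φ : (Fin d → ℝ) → ℝ), LipschitzWith Lφ φ → (∀ x, φ x ≠ 0 → ‖x‖ ≤ ρ0) →
      ∀ (f0 : (Fin d → ℝ) → ℝ), BddAbove (Set.range fun x => |f0 x|) →
      ∀ (w : (Fin d → ℤ) → ℝ), (∀ k, |w k| ≤ cw * h ^ d * ⨆ y, |f0 y|) →
      ∀ (F : (Fin d → ℝ) ≃ (Fin d → ℝ))
        (Bh : (Fin d → ℤ) → (Fin d → ℝ) ≃ (Fin d → ℝ))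
        (Λ : ℝ≥0), 0 < Λ →
        LipschitzWith Λ (F.symm : (Fin d → ℝ) → (Fin d → ℝ)) →
        (∀ k : Fin d → ℤ,
          LipschitzOnWith Λ (Bh k)
            (F '' Function.support (part d h φ k)
              ∪ (Bh k).symm '' Function.support (part d h φ k))) →
      ∀ (eF : ℝ), 0 ≤ eF →
        (∀ k : Fin d → ℤ, ∀ y ∈ Function.support (part d h φ k),
          ‖(Bh k).symm y - F y‖ ≤ eF) →
      ∀ x : Fin d → ℝ,
        |(∑' k : Fin d → ℤ, w k * part d h φ k (Bh k x))
            - ∑' k : Fin d → ℤ, w k * part d h φ k (F.symm x)|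
          ≤ C * (1 + (Λ : ℝ) * eF / h) ^ d * ((Λ : ℝ) * eF / h) * ⨆ y, |f0 y| :=
  transport_error_forward_flow_general d cw hcw Lφ ρ0 hρ0
end

section
/- The particles transported with the LTP operator T̄_{h,(1)} φ⁰_{h,k}(x) := φ⁰_{h,k}(B̄_{(1),k}(x)) have a uniformly bounded overlapping: there exists a constant C depending only on ρ⁰ and d such that sup_{x∈ℝ^d} #{k ∈ ℤ^d : T̄_{h,(1)} φ⁰_{h,k}(x) ≠ 0} ≤ C (1 + h c_F)^d, where c_F := |F̄|₁² |B̄|₂. -/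
/-
If particle `k` is active at `x`, the linearized backward flow `B̄_{(1),k}` maps `x` into the
`h ρ⁰`-ball around the node `x⁰_k`. Inverting the linearization costs a factor `|F̄|₁`, so
`|x - F̄(x⁰_k)| ≤ |F̄|₁ h ρ⁰`, and the second-order Taylor remainder of `B̄` at `F̄(x⁰_k)` is
then at most `|B̄|₂ (|F̄|₁ h ρ⁰)²`. Hence every active node lies within `h (ρ⁰ + ρ⁰² h c_F)` of
the single point `B̄(x)`, and a sup-norm ball of radius `R` contains at most `(2R + 1)^d`
lattice points.
-/
open scoped NNReal
open Set

/-- Partial derivative `∂_l g`. -/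
noncomputable def pd (d : ℕ) (l : Fin d) (g : (Fin d → ℝ) → ℝ) : (Fin d → ℝ) → ℝ :=
  fun x => fderiv ℝ g x (Pi.single l 1)

/-- Linearized backward flow `B̄_{(1),k}(x) := x⁰_k + J_k⁻¹ (x − F̄(x⁰_k))`. -/
noncomputable def B1 (d : ℕ) (h : ℝ) (F : (Fin d → ℝ) ≃ (Fin d → ℝ))
    (k : Fin d → ℤ) (x : Fin d → ℝ) : Fin d → ℝ :=
  node d h k +
    fderiv ℝ (F.symm : (Fin d → ℝ) → (Fin d → ℝ)) (F (node d h k)) (x - F (node d h k))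

section RowSum

variable {ι κ : Type*} [Fintype ι] [Fintype κ] [DecidableEq ι]

open scoped Matrix.Norms.Operator in
theorem ContinuousLinearMap.norm_le_of_sum_abs_apply_single_le (T : (ι → ℝ) →L[ℝ] (κ → ℝ))
    {L : ℝ} (hL : 0 ≤ L) (hT : ∀ i, ∑ l, |T (Pi.single l 1) i| ≤ L) : ‖T‖ ≤ L := by
  rw [← coe_nnnorm, ← Matrix.linfty_opNNNorm_toMatrix, Matrix.linfty_opNNNorm_def,
    ← Real.le_toNNReal_iff_coe_le hL]
  refine Finset.sup_le fun i _ => ?_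
  rw [Real.le_toNNReal_iff_coe_le hL]
  simpa [LinearMap.toMatrix'_apply] using hT i

theorem ContinuousLinearMap.apply_eq_sum_smul_apply_single {M : Type*} [NormedAddCommGroup M]
    [NormedSpace ℝ M] (T : (ι → ℝ) →L[ℝ] M) (u : ι → ℝ) :
    T u = ∑ l, u l • T (Pi.single l 1) := by
  have hu : u = ∑ l, u l • (Pi.single l 1 : ι → ℝ) := by
    ext j
    simp [Pi.single_apply]
  conv_lhs => rw [hu]
  simp only [map_sum, map_smul]

theorem ContinuousLinearMap.norm_le_of_sum_sum_abs_apply_single_le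
    (T : (ι → ℝ) →L[ℝ] (ι → ℝ) →L[ℝ] (κ → ℝ)) {L : ℝ} (hL : 0 ≤ L)
    (hT : ∀ i, ∑ l₁, ∑ l₂, |T (Pi.single l₁ 1) (Pi.single l₂ 1) i| ≤ L) : ‖T‖ ≤ L := by
  refine T.opNorm_le_bound hL fun u => (T u).norm_le_of_sum_abs_apply_single_le
    (by positivity) fun i => ?_
  calc ∑ l₂, |T u (Pi.single l₂ 1) i|
      = ∑ l₂, |∑ l₁, u l₁ * T (Pi.single l₁ 1) (Pi.single l₂ 1) i| := by
        rw [T.apply_eq_sum_smul_apply_single u]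
        simp
    _ ≤ ∑ l₂, ∑ l₁, ‖u‖ * |T (Pi.single l₁ 1) (Pi.single l₂ 1) i| := by
        gcongr with l₂
        refine (Finset.abs_sum_le_sum_abs _ _).trans (Finset.sum_le_sum fun l₁ _ => ?_)
        rw [abs_mul]
        gcongr
        exact norm_le_pi_norm u l₁
    _ ≤ L * ‖u‖ := by
        rw [Finset.sum_comm, mul_comm]
        simp only [← Finset.mul_sum]
        gcongr
        exact hT i

end RowSum

section Calculus

variable {E E' : Type*} [NormedAddCommGroup E] [NormedSpace ℝ E]
  [NormedAddCommGroup E'] [NormedSpace ℝ E']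

theorem norm_sub_sub_fderiv_le_of_lipschitzWith {f : E → E'} (hf : Differentiable ℝ f)
    {M : ℝ≥0} (hM : LipschitzWith M (fderiv ℝ f)) (a x : E) :
    ‖f x - f a - fderiv ℝ f a (x - a)‖ ≤ M * ‖x - a‖ ^ 2 := by
  have hx : x ∈ Metric.closedBall a ‖x - a‖ := by simp [dist_eq_norm]
  have hbound : ∀ z ∈ Metric.closedBall a ‖x - a‖,
      ‖fderiv ℝ f z - fderiv ℝ f a‖ ≤ M * ‖x - a‖ :=
    fun z hz => (hM.norm_sub_le z a).trans (by gcongr; simpa [dist_eq_norm] using hz)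
  calc ‖f x - f a - fderiv ℝ f a (x - a)‖ ≤ M * ‖x - a‖ * ‖x - a‖ :=
        (convex_closedBall a _).norm_image_sub_le_of_norm_fderiv_le' (fun z _ => hf z) hbound
          (Metric.mem_closedBall_self (norm_nonneg _)) hx
    _ = M * ‖x - a‖ ^ 2 := by ring

theorem Equiv.fderiv_apply_fderiv_symm_apply (e : E ≃ E') {y : E'}
    (he : DifferentiableAt ℝ e (e.symm y)) (he' : DifferentiableAt ℝ e.symm y) (v : E') :
    fderiv ℝ e (e.symm y) (fderiv ℝ e.symm y v) = v := by
  have hcomp := he.hasFDerivAt.comp y he'.hasFDerivAt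
  rw [e.self_comp_symm] at hcomp
  exact congrArg (· v) (hcomp.unique (hasFDerivAt_id y))

theorem Equiv.norm_symm_sub_le_of_norm_fderiv_symm_apply_le (F : E ≃ E) {p x : E}
    (hF : DifferentiableAt ℝ F p) (hB : Differentiable ℝ F.symm) {K : ℝ}
    (hK : ‖fderiv ℝ F p‖ ≤ K) {M : ℝ≥0} (hM : LipschitzWith M (fderiv ℝ F.symm)) {r : ℝ}
    (hr : ‖fderiv ℝ F.symm (F p) (x - F p)‖ ≤ r) :
    ‖F.symm x - p‖ ≤ r + M * (K * r) ^ 2 := by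
  have hFp : F.symm (F p) = p := F.symm_apply_apply p
  have hdist : ‖x - F p‖ ≤ K * r := by
    have hid := F.fderiv_apply_fderiv_symm_apply (y := F p) (by rwa [hFp]) (hB _) (x - F p)
    rw [hFp] at hid
    calc ‖x - F p‖ ≤ ‖fderiv ℝ F p‖ * ‖fderiv ℝ F.symm (F p) (x - F p)‖ := by
          conv_lhs => rw [← hid]
          exact ContinuousLinearMap.le_opNorm _ _
      _ ≤ K * r := mul_le_mul hK hr (norm_nonneg _) ((norm_nonneg _).trans hK)
  calc ‖F.symm x - p‖
      = ‖(F.symm x - F.symm (F p) - fderiv ℝ F.symm (F p) (x - F p))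
          + fderiv ℝ F.symm (F p) (x - F p)‖ := by rw [hFp]; abel_nf
    _ ≤ M * ‖x - F p‖ ^ 2 + r :=
        norm_add_le_of_le (norm_sub_sub_fderiv_le_of_lipschitzWith hB hM _ _) hr
    _ ≤ r + M * (K * r) ^ 2 := by
        rw [add_comm]
        gcongr

end Calculus

section PartialDerivatives

variable {d : ℕ} {f : (Fin d → ℝ) → (Fin d → ℝ)}

theorem pd_apply_eq_fderiv_apply {x : Fin d → ℝ} (hf : DifferentiableAt ℝ f x) (l i : Fin d) :
    pd d l (fun y => f y i) x = fderiv ℝ f x (Pi.single l 1) i := by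
  rw [pd, fderiv_apply hf]
  rfl

theorem pd_pd_apply_eq_fderiv_fderiv_apply (hf : ContDiff ℝ 2 f) (x : Fin d → ℝ)
    (l₁ l₂ i : Fin d) :
    pd d l₁ (pd d l₂ (fun y => f y i)) x
      = fderiv ℝ (fderiv ℝ f) x (Pi.single l₁ 1) (Pi.single l₂ 1) i := by
  have hf' : Differentiable ℝ (fderiv ℝ f) :=
    (hf.fderiv_right (by norm_num)).differentiable one_ne_zero
  have hpd : pd d l₂ (fun y => f y i)
      = ((ContinuousLinearMap.proj i).comp (ContinuousLinearMap.apply ℝ _ (Pi.single l₂ 1)))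
          ∘ fderiv ℝ f := by
    funext y
    exact pd_apply_eq_fderiv_apply (hf.differentiable (by norm_num) y) l₂ i
  rw [pd, hpd, ((ContinuousLinearMap.hasFDerivAt _).comp x (hf' x).hasFDerivAt).fderiv]
  rfl

theorem norm_fderiv_le_of_sum_abs_pd_le {x : Fin d → ℝ} (hf : DifferentiableAt ℝ f x)
    {L : ℝ} (hL : 0 ≤ L) (hpd : ∀ i, ∑ l, |pd d l (fun y => f y i) x| ≤ L) :
    ‖fderiv ℝ f x‖ ≤ L :=
  (fderiv ℝ f x).norm_le_of_sum_abs_apply_single_le hL fun i => by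
    simpa only [pd_apply_eq_fderiv_apply hf] using hpd i

theorem lipschitzWith_fderiv_of_sum_sum_abs_pd_pd_le (hf : ContDiff ℝ 2 f) {L : ℝ}
    (hL : 0 ≤ L) (hpd : ∀ i x, ∑ l₁, ∑ l₂, |pd d l₁ (pd d l₂ (fun y => f y i)) x| ≤ L) :
    LipschitzWith L.toNNReal (fderiv ℝ f) := by
  refine lipschitzWith_of_nnnorm_fderiv_le
    ((hf.fderiv_right (by norm_num)).differentiable one_ne_zero) fun x => ?_
  rw [← NNReal.coe_le_coe, coe_nnnorm, Real.coe_toNNReal L hL]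
  exact (fderiv ℝ (fderiv ℝ f) x).norm_le_of_sum_sum_abs_apply_single_le hL fun i => by
    simpa only [pd_pd_apply_eq_fderiv_fderiv_apply hf] using hpd i x

end PartialDerivatives

section LatticeCount

theorem card_Icc_ceil_floor_le {a b : ℝ} (hab : a ≤ b + 1) :
    ((Finset.Icc ⌈a⌉ ⌊b⌋).card : ℝ) ≤ b - a + 1 := by
  rw [Int.card_Icc]
  rcases le_or_gt (⌊b⌋ + 1 - ⌈a⌉) 0 with hle | hlt
  · rw [Int.toNat_of_nonpos hle]
    simp only [CharP.cast_eq_zero]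
    linarith
  · rw [← Int.cast_natCast, Int.toNat_of_nonneg hlt.le]
    push_cast
    linarith [Int.floor_le b, Int.le_ceil a]

theorem Set.finite_and_ncard_le_of_forall_norm_intCast_sub_le {ι : Type*} [Fintype ι]
    {S : Set (ι → ℤ)} (c : ι → ℝ) {R : ℝ} (hR : 0 ≤ R)
    (hS : ∀ k ∈ S, ‖(fun i => (k i : ℝ)) - c‖ ≤ R) :
    S.Finite ∧ (S.ncard : ℝ) ≤ (2 * R + 1) ^ Fintype.card ι := by
  classical
  set box := Fintype.piFinset fun i => Finset.Icc ⌈c i - R⌉ ⌊c i + R⌋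
  have hsub : S ⊆ box := fun k hk => by
    have hk := (pi_norm_le_iff_of_nonneg hR).1 (hS k hk)
    simp only [box, Finset.mem_coe, Fintype.mem_piFinset, Finset.mem_Icc,
      Int.ceil_le, Int.le_floor]
    intro i
    obtain ⟨hlo, hhi⟩ := abs_le.1 (hk i)
    simp only [Pi.sub_apply] at hlo hhi
    exact ⟨by linarith, by linarith⟩
  refine ⟨box.finite_toSet.subset hsub, ?_⟩
  calc (S.ncard : ℝ) ≤ box.card := by
        exact_mod_cast (Set.ncard_le_ncard hsub box.finite_toSet).trans_eq (Set.ncard_coe_finset _)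
    _ = ∏ i, ((Finset.Icc ⌈c i - R⌉ ⌊c i + R⌋).card : ℝ) := by
        rw [Fintype.card_piFinset]
        push_cast
        rfl
    _ ≤ ∏ _i : ι, (2 * R + 1) := by
        gcongr with i
        exact (card_Icc_ceil_floor_le (by linarith)).trans_eq (by ring)
    _ = (2 * R + 1) ^ Fintype.card ι := by simp

end LatticeCount

section Particles

variable {d : ℕ} {h : ℝ}

theorem norm_sub_node_le_of_part_ne_zero {ρ : ℝ} {φ : (Fin d → ℝ) → ℝ} {k : Fin d → ℤ}
    {y : Fin d → ℝ} (hh : 0 < h) (hφ : ∀ x, φ x ≠ 0 → ‖x‖ ≤ ρ) (hk : part d h φ k y ≠ 0) :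
    ‖y - node d h k‖ ≤ h * ρ := by
  have hne : φ (fun i => y i / h - k i) ≠ 0 := fun h0 => hk (by simp [part, h0])
  have heq : y - node d h k = h • fun i => y i / h - k i := by
    funext i
    simp only [Pi.sub_apply, node, Pi.smul_apply, smul_eq_mul]
    field_simp
  rw [heq, norm_smul, Real.norm_of_nonneg hh.le]
  gcongr
  exact hφ _ hne

theorem norm_intCast_sub_le_of_norm_node_sub_le (hh : 0 < h) {R : ℝ} {k : Fin d → ℤ}
    {c : Fin d → ℝ} (hk : ‖node d h k - c‖ ≤ h * R) :
    ‖(fun i => (k i : ℝ)) - h⁻¹ • c‖ ≤ R := by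
  have heq : node d h k - c = h • ((fun i => (k i : ℝ)) - h⁻¹ • c) := by
    rw [smul_sub, smul_inv_smul₀ hh.ne']
    rfl
  rw [heq, norm_smul, Real.norm_of_nonneg hh.le] at hk
  exact le_of_mul_le_mul_left hk hh

end Particles

/-- particles transported with the LTP operator have uniformly bounded
overlapping: `sup_x #{k : T̄_{h,(1)} φ⁰_{h,k}(x) ≠ 0} ≤ C (1 + h c_F)^d` with
`c_F := |F̄|₁² |B̄|₂` and `C = C(ρ⁰, d)`. -/
theorem LTP_bounded_overlapping
    (d : ℕ) (hd : 1 ≤ d) (ρ0 : ℝ) (hρ0 : 0 < ρ0) :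
    ∃ C : ℝ, 0 < C ∧
      ∀ (h : ℝ), 0 < h →
      ∀ (φ : (Fin d → ℝ) → ℝ) (Lφ : ℝ≥0), LipschitzWith Lφ φ →
        (∀ x, φ x ≠ 0 → ‖x‖ ≤ ρ0) →
      ∀ (F : (Fin d → ℝ) ≃ (Fin d → ℝ)),
        ContDiff ℝ 1 (F : (Fin d → ℝ) → (Fin d → ℝ)) →
        ContDiff ℝ 2 (F.symm : (Fin d → ℝ) → (Fin d → ℝ)) →
      ∀ (cF1 : ℝ), (∀ (i : Fin d) (x : Fin d → ℝ),
          ∑ l : Fin d, |pd d l (fun y => F y i) x| ≤ cF1) →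
      ∀ (cB2 : ℝ), (∀ (i : Fin d) (x : Fin d → ℝ),
          ∑ l1 : Fin d, ∑ l2 : Fin d,
            |pd d l1 (pd d l2 (fun y => F.symm y i)) x| ≤ cB2) →
      ∀ x : Fin d → ℝ,
        {k : Fin d → ℤ | part d h φ k (B1 d h F k x) ≠ 0}.Finite ∧
        (({k : Fin d → ℤ | part d h φ k (B1 d h F k x) ≠ 0}).ncard : ℝ)
          ≤ C * (1 + h * (cF1 ^ 2 * cB2)) ^ d := by
  refine ⟨(1 + 2 * ρ0 + 2 * ρ0 ^ 2) ^ d, by positivity, ?_⟩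
  intro h hh φ _ _ hsupp F hF hB cF1 hcF cB2 hcB x
  have i₀ : Fin d := ⟨0, hd⟩
  have hcF1 : 0 ≤ cF1 := (Finset.sum_nonneg fun _ _ => abs_nonneg _).trans (hcF i₀ x)
  have hcB2 : 0 ≤ cB2 :=
    (Finset.sum_nonneg fun _ _ => Finset.sum_nonneg fun _ _ => abs_nonneg _).trans (hcB i₀ x)
  have hFdiff : Differentiable ℝ F := hF.differentiable one_ne_zero
  have hLip := lipschitzWith_fderiv_of_sum_sum_abs_pd_pd_le hB hcB2 hcB
  have hq : 0 ≤ h * (cF1 ^ 2 * cB2) := by positivity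
  have hnear : ∀ k ∈ {k : Fin d → ℤ | part d h φ k (B1 d h F k x) ≠ 0},
      ‖(fun i => (k i : ℝ)) - h⁻¹ • F.symm x‖ ≤ ρ0 + ρ0 ^ 2 * (h * (cF1 ^ 2 * cB2)) := by
    intro k hk
    have hr := norm_sub_node_le_of_part_ne_zero hh hsupp hk
    rw [B1, add_sub_cancel_left] at hr
    have hBx := F.norm_symm_sub_le_of_norm_fderiv_symm_apply_le (hFdiff _)
      (hB.differentiable two_ne_zero)
      (norm_fderiv_le_of_sum_abs_pd_le (hFdiff _) hcF1 fun i => hcF i _) hLip hr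
    refine norm_intCast_sub_le_of_norm_node_sub_le hh
      (((norm_sub_rev _ _).trans_le hBx).trans_eq ?_)
    rw [Real.coe_toNNReal _ hcB2]
    ring
  obtain ⟨hfin, hcard⟩ :=
    Set.finite_and_ncard_le_of_forall_norm_intCast_sub_le _ (by positivity) hnear
  refine ⟨hfin, hcard.trans ?_⟩
  rw [Fintype.card_fin, ← mul_pow]
  gcongr
  nlinarith
end

section
/- Suppose each approximate backward flow B̄_{h,k} is a bijection of ℝ^d with inverse F̄_{h,k}, set Σ_{h,k} := F̄(Σ⁰_{h,k}) ∪ F̄_{h,k}(Σ⁰_{h,k}) and e_B(h) := sup_{k∈ℤ^d} sup_{x∈Σ_{h,k}} ‖B̄_{h,k}(x) − B̄(x)‖_∞. Then the overlapping constant Θ(h) := sup_{x∈ℝ^d} #{k ∈ ℤ^d : x ∈ Σ_{h,k}} satisfies Θ(h) ≤ C (1 + h^{−1} e_B(h))^d for a constant C depending only on ρ⁰ and d. -/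
open scoped NNReal
open Set

/-- Counting lattice points in an axis-parallel box of radius `r`. -/
lemma lattice_finite_card (d : ℕ) (c : Fin d → ℝ) (r : ℝ) (hr : 0 ≤ r) :
    {k : Fin d → ℤ | ∀ i, |(k i : ℝ) - c i| ≤ r}.Finite ∧
    (({k : Fin d → ℤ | ∀ i, |(k i : ℝ) - c i| ≤ r}).ncard : ℝ) ≤ (2 * r + 1) ^ d := by
  classical
  set s : Fin d → Finset ℤ := fun i => Finset.Icc ⌈c i - r⌉ ⌊c i + r⌋ with hs
  have hsub : {k : Fin d → ℤ | ∀ i, |(k i : ℝ) - c i| ≤ r}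
      ⊆ ↑(Fintype.piFinset s) := by
    intro k hk
    simp only [Finset.mem_coe, Fintype.mem_piFinset, hs, Finset.mem_Icc]
    intro i
    have h1 := hk i
    rw [abs_le] at h1
    exact ⟨Int.ceil_le.2 (by linarith [h1.1]), Int.le_floor.2 (by linarith [h1.2])⟩
  have hfin := (Fintype.piFinset s).finite_toSet.subset hsub
  refine ⟨hfin, ?_⟩
  have hcard : {k : Fin d → ℤ | ∀ i, |(k i : ℝ) - c i| ≤ r}.ncard
      ≤ (Fintype.piFinset s).card := by
    have := Set.ncard_le_ncard hsub (Fintype.piFinset s).finite_toSet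
    rwa [Set.ncard_coe_finset] at this
  have hb : ∀ i, ((s i).card : ℝ) ≤ 2 * r + 1 := by
    intro i
    have hfl : (⌊c i + r⌋ : ℝ) ≤ c i + r := Int.floor_le _
    have hcl : c i - r ≤ (⌈c i - r⌉ : ℝ) := Int.le_ceil _
    rw [hs]
    simp only [Int.card_Icc]
    rcases le_or_gt (⌊c i + r⌋ + 1 - ⌈c i - r⌉) 0 with h0 | h0
    · rw [Int.toNat_of_nonpos h0]
      push_cast
      linarith
    · have heq : ((⌊c i + r⌋ + 1 - ⌈c i - r⌉).toNat : ℝ)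
          = (⌊c i + r⌋ : ℝ) + 1 - (⌈c i - r⌉ : ℝ) := by
        rw [← Int.cast_natCast, Int.toNat_of_nonneg h0.le]
        push_cast; ring
      rw [heq]
      linarith
  calc ({k : Fin d → ℤ | ∀ i, |(k i : ℝ) - c i| ≤ r}.ncard : ℝ)
      ≤ ((Fintype.piFinset s).card : ℝ) := by exact_mod_cast hcard
    _ = ∏ i, ((s i).card : ℝ) := by rw [Fintype.card_piFinset]; push_cast; rfl
    _ ≤ ∏ _i : Fin d, (2 * r + 1) :=
        Finset.prod_le_prod (fun i _ => Nat.cast_nonneg _) (fun i _ => hb i)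
    _ = (2 * r + 1) ^ d := by simp [Finset.prod_const]

/-- with `Σ_{h,k} := F̄(Σ⁰_{h,k}) ∪ F̄_{h,k}(Σ⁰_{h,k})` and `e_B(h)` the
backward flow error, the overlapping constant satisfies
`Θ(h) ≤ C (1 + h⁻¹ e_B(h))^d` with `C = C(ρ⁰, d)`. -/
theorem overlapping_constant_bound
    (d : ℕ) (hd : 1 ≤ d) (ρ0 : ℝ) (hρ0 : 0 < ρ0) :
    ∃ C : ℝ, 0 < C ∧
      ∀ (h : ℝ), 0 < h →
      ∀ (φ : (Fin d → ℝ) → ℝ) (Lφ : ℝ≥0), LipschitzWith Lφ φ →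
        (∀ x, φ x ≠ 0 → ‖x‖ ≤ ρ0) →
      ∀ (F : (Fin d → ℝ) ≃ (Fin d → ℝ))
        (Bh : (Fin d → ℤ) → (Fin d → ℝ) ≃ (Fin d → ℝ))
        (eB : ℝ), 0 ≤ eB →
        (∀ k, ∀ x ∈ (F '' Function.support (part d h φ k)
              ∪ (Bh k).symm '' Function.support (part d h φ k)),
            ‖Bh k x - F.symm x‖ ≤ eB) →
      ∀ x : Fin d → ℝ,
        {k : Fin d → ℤ | x ∈ F '' Function.support (part d h φ k)
            ∪ (Bh k).symm '' Function.support (part d h φ k)}.Finite ∧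
        (({k : Fin d → ℤ | x ∈ F '' Function.support (part d h φ k)
            ∪ (Bh k).symm '' Function.support (part d h φ k)}).ncard : ℝ)
          ≤ C * (1 + h⁻¹ * eB) ^ d := by
  refine ⟨(2 * ρ0 + 3) ^ d, by positivity, ?_⟩
  intro h hh φ Lφ hLip hsupp F Bh eB heB herr x
  set c : Fin d → ℝ := fun i => F.symm x i / h with hc
  set r : ℝ := ρ0 + eB / h with hrdef
  have hr0 : 0 ≤ r := by positivity
  obtain ⟨hfin, hcard⟩ := lattice_finite_card d c r hr0
  -- supports are in boxes
  have key : ∀ k y, y ∈ Function.support (part d h φ k) →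
      ∀ i, |y i / h - (k i : ℝ)| ≤ ρ0 := by
    intro k y hy i
    have hφ : φ (fun i => y i / h - (k i : ℝ)) ≠ 0 := by
      intro h0
      apply hy
      simp [part, h0]
    have hn := hsupp _ hφ
    have := norm_le_pi_norm (fun i => y i / h - (k i : ℝ)) i
    rw [Real.norm_eq_abs] at this
    exact this.trans hn
  have hsub : {k : Fin d → ℤ | x ∈ F '' Function.support (part d h φ k)
      ∪ (Bh k).symm '' Function.support (part d h φ k)}
      ⊆ {k : Fin d → ℤ | ∀ i, |(k i : ℝ) - c i| ≤ r} := by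
    intro k hk i
    rcases hk with ⟨y, hy, hxy⟩ | ⟨y, hy, hxy⟩
    · have hy' : F.symm x = y := by rw [← hxy]; simp
      have h1 := key k y hy i
      have : |(k i : ℝ) - c i| ≤ ρ0 := by
        rw [abs_sub_comm, hc]
        simpa [hy'] using h1
      refine this.trans ?_
      rw [hrdef]
      have : 0 ≤ eB / h := by positivity
      linarith
    · have hy' : Bh k x = y := by rw [← hxy]; simp
      have h1 := key k (Bh k x) (by rw [hy']; exact hy) i
      have h2 : ‖Bh k x - F.symm x‖ ≤ eB := herr k x (Or.inr ⟨y, hy, hxy⟩)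
      have h3 : |Bh k x i - F.symm x i| ≤ eB := by
        have hpn := norm_le_pi_norm (Bh k x - F.symm x) i
        rw [Real.norm_eq_abs] at hpn
        exact (le_of_eq (by simp)).trans (hpn.trans h2)
      have h4 : |Bh k x i / h - F.symm x i / h| ≤ eB / h := by
        rw [div_sub_div_same, abs_div, abs_of_pos hh]
        exact (div_le_div_iff_of_pos_right hh).2 h3
      have : |(k i : ℝ) - c i| ≤ |(k i : ℝ) - Bh k x i / h| + |Bh k x i / h - c i| := by
        have := abs_sub_le ((k i : ℝ)) (Bh k x i / h) (c i)
        linarith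
      rw [hrdef]
      calc |(k i : ℝ) - c i|
          ≤ |(k i : ℝ) - Bh k x i / h| + |Bh k x i / h - c i| := this
        _ ≤ ρ0 + eB / h := by
            rw [abs_sub_comm] at h1
            exact add_le_add h1 h4
  refine ⟨hfin.subset hsub, ?_⟩
  have hle : ({k : Fin d → ℤ | x ∈ F '' Function.support (part d h φ k)
      ∪ (Bh k).symm '' Function.support (part d h φ k)}.ncard : ℝ)
      ≤ ({k : Fin d → ℤ | ∀ i, |(k i : ℝ) - c i| ≤ r}.ncard : ℝ) := by
    exact_mod_cast Set.ncard_le_ncard hsub hfin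
  refine (hle.trans hcard).trans ?_
  have ht : 0 ≤ eB / h := by positivity
  have hbase : 2 * r + 1 ≤ (2 * ρ0 + 3) * (1 + h⁻¹ * eB) := by
    rw [hrdef]
    have heq : h⁻¹ * eB = eB / h := by rw [div_eq_inv_mul]
    rw [heq]
    nlinarith [ht, hρ0.le]
  calc (2 * r + 1) ^ d ≤ ((2 * ρ0 + 3) * (1 + h⁻¹ * eB)) ^ d := by
        apply pow_le_pow_left₀ (by positivity) hbase
    _ = (2 * ρ0 + 3) ^ d * (1 + h⁻¹ * eB) ^ d := mul_pow _ _ _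
end
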